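/- Let β > 0 and ε > 0, and define the hybrid scale density s_{β,ε}(x) = (1 − x²)^{−1} · exp( (e^β − 2/ε²) ∫_0^x e^{−βy}/(1 − y²) dy ) for x ∈ (−1, 1). Then the improper integral ∫_0^1 s_{β,ε}(x) dx is finite if and only if ε² < 2 e^{−β}, and the improper integral ∫_{−1}^0 s_{β,ε}(x) dx is finite if and only if ε² > 2 e^{−β}. -/

import Mathlib

open Real MeasureTheory intervalIntegral Set

/-- Hybrid scale density
`s_{β,ε}(x) = (1 − x²)⁻¹ exp((e^β − 2/ε²) ∫₀ˣ e^{−βy}/(1 − y²) dy)`. -/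
noncomputable def hybridScaleDensity (β ε x : ℝ) : ℝ :=
  (1 - x ^ 2)⁻¹ *
    exp ((exp β - 2 / ε ^ 2) * ∫ y in (0 : ℝ)..x, exp (-β * y) / (1 - y ^ 2))

namespace HybridAux

noncomputable def F (β x : ℝ) : ℝ := ∫ y in (0 : ℝ)..x, exp (-β * y) / (1 - y ^ 2)

lemma g_contOn {β a b : ℝ} (ha : -1 < a) (hb : b < 1) :
    ContinuousOn (fun y : ℝ => exp (-β * y) / (1 - y ^ 2)) (Icc a b) := by
  apply ContinuousOn.div
  · exact (Real.continuous_exp.comp (continuous_const.mul continuous_id)).continuousOn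
  · exact (continuous_const.sub (continuous_pow 2)).continuousOn
  · intro y hy
    have h1 := hy.1; have h2 := hy.2
    have : 0 < 1 - y ^ 2 := by nlinarith
    exact this.ne'

lemma F_continuousAt {β x₀ : ℝ} (hx : x₀ ∈ Ioo (-1 : ℝ) 1) : ContinuousAt (F β) x₀ := by
  set a := (-1 + min x₀ 0) / 2 with hadef
  set b := (1 + max x₀ 0) / 2 with hbdef
  have hm : -1 < min x₀ 0 := lt_min hx.1 (by norm_num)
  have hM : max x₀ 0 < 1 := max_lt hx.2 (by norm_num)
  have ha1 : -1 < a := by rw [hadef]; linarith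
  have ham : a < min x₀ 0 := by rw [hadef]; linarith
  have hbM : max x₀ 0 < b := by rw [hbdef]; linarith
  have hb1 : b < 1 := by rw [hbdef]; linarith
  have hax : a < x₀ := lt_of_lt_of_le ham (min_le_left _ _)
  have hxb : x₀ < b := lt_of_le_of_lt (le_max_left _ _) hbM
  have ha0 : a ≤ 0 := (lt_of_lt_of_le ham (min_le_right _ _)).le
  have hb0 : 0 ≤ b := (lt_of_le_of_lt (le_max_right _ _) hbM).le
  have hab : a ≤ b := by linarith
  have hgi : IntervalIntegrable (fun y : ℝ => exp (-β * y) / (1 - y ^ 2)) volume a b := by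
    apply ContinuousOn.intervalIntegrable
    rw [uIcc_of_le hab]; exact g_contOn ha1 hb1
  have hcont := continuousOn_primitive_interval' hgi
    (by rw [uIcc_of_le hab]; exact ⟨ha0, hb0⟩)
  have hmem : x₀ ∈ Set.uIcc a b := by rw [uIcc_of_le hab]; exact ⟨hax.le, hxb.le⟩
  refine ContinuousWithinAt.continuousAt (hcont x₀ hmem) ?_
  rw [uIcc_of_le hab]
  exact Icc_mem_nhds hax hxb

lemma hsd_continuousOn (β ε : ℝ) :
    ContinuousOn (hybridScaleDensity β ε) (Ioo (-1 : ℝ) 1) := by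
  have hF : ContinuousOn (F β) (Ioo (-1 : ℝ) 1) :=
    fun x hx => (F_continuousAt hx).continuousWithinAt
  have h1 : ContinuousOn (fun x : ℝ => (1 - x ^ 2)⁻¹) (Ioo (-1 : ℝ) 1) := by
    apply ContinuousOn.inv₀ (continuous_const.sub (continuous_pow 2)).continuousOn
    intro x hx
    have h1 := hx.1; have h2 := hx.2
    have : 0 < 1 - x ^ 2 := by nlinarith
    exact this.ne'
  exact h1.mul (Real.continuous_exp.comp_continuousOn (continuousOn_const.mul hF))

lemma F_lower {β : ℝ} (hβ : 0 < β) {x : ℝ} (hx : x ∈ Ioo (0 : ℝ) 1) :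
    exp (-β) / 2 * (-log (1 - x)) ≤ F β x := by
  obtain ⟨hx0, hx1⟩ := hx
  have hlog : ∫ y in (0 : ℝ)..x, (1 - y)⁻¹ = -log (1 - x) := by
    rw [integral_eq_sub_of_hasDerivAt (f := fun y => -log (1 - y))
      (f' := fun y => (1 - y)⁻¹)]
    · simp
    · intro y hy
      rw [uIcc_of_le hx0.le] at hy
      have h1 : (0:ℝ) < 1 - y := by linarith [hy.2]
      have hd := ((Real.hasDerivAt_log h1.ne').comp y
        (((hasDerivAt_id y).const_sub 1))).neg
      convert hd using 1
      · rfl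
      · ring
    · apply ContinuousOn.intervalIntegrable
      rw [uIcc_of_le hx0.le]
      apply ContinuousOn.inv₀ (continuous_const.sub continuous_id).continuousOn
      intro y hy
      have : (0:ℝ) < 1 - y := by linarith [hy.2]
      exact this.ne'
  have hint1 : IntervalIntegrable (fun y : ℝ => exp (-β) / 2 * (1 - y)⁻¹) volume 0 x := by
    apply ContinuousOn.intervalIntegrable
    rw [uIcc_of_le hx0.le]
    apply ContinuousOn.mul continuousOn_const
    apply ContinuousOn.inv₀ (continuous_const.sub continuous_id).continuousOn
    intro y hy
    have : (0:ℝ) < 1 - y := by linarith [hy.2]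
    exact this.ne'
  have hint2 : IntervalIntegrable (fun y : ℝ => exp (-β * y) / (1 - y ^ 2)) volume 0 x := by
    apply ContinuousOn.intervalIntegrable
    rw [uIcc_of_le hx0.le]
    exact g_contOn (by norm_num) hx1
  have hmono := integral_mono_on hx0.le hint1 hint2 (fun y hy => by
    have hy0 := hy.1; have hy1 : y < 1 := lt_of_le_of_lt hy.2 hx1
    have h1 : (0:ℝ) < 1 - y := by linarith
    have h2 : (0:ℝ) < 1 - y ^ 2 := by nlinarith
    have hE : exp (-β) ≤ exp (-β * y) := exp_le_exp.2 (by nlinarith)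
    rw [show exp (-β) / 2 * (1 - y)⁻¹ = exp (-β) / (2 * (1 - y)) by
      field_simp]
    rw [div_le_div_iff₀ (by positivity) h2]
    nlinarith [mul_le_mul_of_nonneg_right hE (by linarith : (0:ℝ) ≤ 2 * (1 - y)),
      mul_nonneg (exp_pos (-β)).le (sq_nonneg (1 - y))])
  calc exp (-β) / 2 * (-log (1 - x))
      = ∫ y in (0:ℝ)..x, exp (-β) / 2 * (1 - y)⁻¹ := by
        rw [intervalIntegral.integral_const_mul, hlog]
    _ ≤ F β x := hmono

lemma F_nonneg {β : ℝ} {x : ℝ} (hx : x ∈ Ioo (0 : ℝ) 1) : 0 ≤ F β x := by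
  apply integral_nonneg hx.1.le
  intro y hy
  have h2 : (0:ℝ) < 1 - y ^ 2 := by nlinarith [hy.1, lt_of_le_of_lt hy.2 hx.2]
  exact (div_pos (exp_pos _) h2).le

lemma F_upper {β : ℝ} (hβ : 0 < β) {x : ℝ} (hx : x ∈ Ioo (-1 : ℝ) 0) :
    F β x ≤ 1 / 2 * log (1 + x) := by
  obtain ⟨hx0, hx1⟩ := hx
  have h1x : (0:ℝ) < 1 + x := by linarith
  have hlog : ∫ y in x..(0:ℝ), (1 + y)⁻¹ = -log (1 + x) := by
    rw [integral_eq_sub_of_hasDerivAt (f := fun y => log (1 + y))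
      (f' := fun y => (1 + y)⁻¹)]
    · norm_num
    · intro y hy
      rw [uIcc_of_le hx1.le] at hy
      have h1 : (0:ℝ) < 1 + y := by linarith [hy.1]
      have hd := (Real.hasDerivAt_log h1.ne').comp y ((hasDerivAt_id y).const_add 1)
      convert hd using 1
      · rfl
      · rfl
      · ring
    · apply ContinuousOn.intervalIntegrable
      rw [uIcc_of_le hx1.le]
      apply ContinuousOn.inv₀ (continuous_const.add continuous_id).continuousOn
      intro y hy
      have : (0:ℝ) < 1 + y := by linarith [hy.1]
      exact this.ne'
  have hint1 : IntervalIntegrable (fun y : ℝ => 1 / 2 * (1 + y)⁻¹) volume x 0 := by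
    apply ContinuousOn.intervalIntegrable
    rw [uIcc_of_le hx1.le]
    apply ContinuousOn.mul continuousOn_const
    apply ContinuousOn.inv₀ (continuous_const.add continuous_id).continuousOn
    intro y hy
    have : (0:ℝ) < 1 + y := by linarith [hy.1]
    exact this.ne'
  have hint2 : IntervalIntegrable (fun y : ℝ => exp (-β * y) / (1 - y ^ 2)) volume x 0 := by
    apply ContinuousOn.intervalIntegrable
    rw [uIcc_of_le hx1.le]
    exact g_contOn hx0 (by norm_num)
  have hmono := integral_mono_on hx1.le hint1 hint2 (fun y hy => by
    have hy0 : -1 < y := lt_of_lt_of_le hx0 hy.1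
    have hy1 := hy.2
    have h1 : (0:ℝ) < 1 + y := by linarith
    have h2 : (0:ℝ) < 1 - y ^ 2 := by nlinarith
    have hE : (1:ℝ) ≤ exp (-β * y) := by
      rw [show (1:ℝ) = exp 0 by simp]
      exact exp_le_exp.2 (by nlinarith)
    rw [show (1:ℝ) / 2 * (1 + y)⁻¹ = 1 / (2 * (1 + y)) by
      field_simp]
    rw [div_le_div_iff₀ (by positivity) h2]
    nlinarith [mul_le_mul_of_nonneg_right hE (by linarith : (0:ℝ) ≤ 2 * (1 + y)),
      sq_nonneg (1 + y)])
  have hval : ∫ y in x..(0:ℝ), 1 / 2 * (1 + y)⁻¹ = 1 / 2 * (-log (1 + x)) := by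
    rw [intervalIntegral.integral_const_mul, hlog]
  have hsymm : F β x = -∫ y in x..(0:ℝ), exp (-β * y) / (1 - y ^ 2) := by
    rw [F, integral_symm]
  rw [hsymm]
  rw [hval] at hmono
  linarith

lemma F_nonpos {β : ℝ} {x : ℝ} (hx : x ∈ Ioo (-1 : ℝ) 0) : F β x ≤ 0 := by
  have hsymm : F β x = -∫ y in x..(0:ℝ), exp (-β * y) / (1 - y ^ 2) := by
    rw [F, integral_symm]
  rw [hsymm, neg_nonpos]
  apply integral_nonneg hx.2.le
  intro y hy
  have h2 : (0:ℝ) < 1 - y ^ 2 := by nlinarith [lt_of_lt_of_le hx.1 hy.1, hy.2]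
  exact (div_pos (exp_pos _) h2).le

lemma int_one_sub {a : ℝ} (ha : -1 < a) :
    IntegrableOn (fun x : ℝ => (1 - x) ^ a) (Ioo (0 : ℝ) 1) := by
  have h1 : IntervalIntegrable (fun t : ℝ => t ^ a) volume 0 1 :=
    intervalIntegrable_rpow' ha
  have h2 := (h1.comp_sub_left 1).symm
  norm_num at h2
  rw [← intervalIntegrable_iff_integrableOn_Ioo_of_le (by norm_num : (0:ℝ) ≤ 1)]
  exact h2

lemma int_one_add {a : ℝ} (ha : -1 < a) :
    IntegrableOn (fun x : ℝ => (1 + x) ^ a) (Ioo (-1 : ℝ) 0) := by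
  have h1 : IntervalIntegrable (fun t : ℝ => t ^ a) volume 0 1 :=
    intervalIntegrable_rpow' ha
  have h2 := h1.comp_add_right 1
  norm_num at h2
  rw [← intervalIntegrable_iff_integrableOn_Ioo_of_le (by norm_num : (-1:ℝ) ≤ 0)]
  simpa [add_comm] using h2

lemma notint_right : ¬ IntegrableOn (fun x : ℝ => (1 - x)⁻¹) (Ioo (0 : ℝ) 1) := by
  intro h
  have h1 : IntervalIntegrable (fun x : ℝ => (1 - x)⁻¹) volume 0 1 :=
    (intervalIntegrable_iff_integrableOn_Ioo_of_le (by norm_num)).2 h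
  have h2 : IntervalIntegrable (fun x : ℝ => (x - 1)⁻¹) volume 0 1 := by
    have heq : (fun x : ℝ => (x - 1)⁻¹) = -fun x : ℝ => (1 - x)⁻¹ := by
      funext x
      simp only [Pi.neg_apply, ← inv_neg, neg_sub]
    rw [heq]
    exact h1.neg
  rw [intervalIntegrable_sub_inv_iff] at h2
  rcases h2 with h2 | h2
  · norm_num at h2
  · exact h2 (by rw [uIcc_of_le (by norm_num : (0:ℝ) ≤ 1)]; constructor <;> norm_num)

lemma notint_left : ¬ IntegrableOn (fun x : ℝ => (1 + x)⁻¹) (Ioo (-1 : ℝ) 0) := by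
  intro h
  have h1 : IntervalIntegrable (fun x : ℝ => (1 + x)⁻¹) volume (-1) 0 :=
    (intervalIntegrable_iff_integrableOn_Ioo_of_le (by norm_num)).2 h
  have h2 : IntervalIntegrable (fun x : ℝ => (x - (-1))⁻¹) volume (-1) 0 := by
    have heq : (fun x : ℝ => (x - (-1))⁻¹) = fun x : ℝ => (1 + x)⁻¹ := by
      funext x
      rw [show x - (-1) = 1 + x by ring]
    rw [heq]
    exact h1
  rw [intervalIntegrable_sub_inv_iff] at h2
  rcases h2 with h2 | h2
  · norm_num at h2
  · exact h2 (by rw [uIcc_of_le (by norm_num : (-1:ℝ) ≤ 0)]; constructor <;> norm_num)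

lemma right_integrable {β ε : ℝ} (hβ : 0 < β) (hε : 0 < ε)
    (h : exp β - 2 / ε ^ 2 < 0) :
    IntegrableOn (hybridScaleDensity β ε) (Ioo (0 : ℝ) 1) := by
  set c := exp β - 2 / ε ^ 2 with hc
  set a := -c * exp (-β) / 2 with ha
  clear_value c
  have ha0 : 0 < a := div_pos (mul_pos (neg_pos.2 h) (exp_pos _)) two_pos
  apply Integrable.mono' (int_one_sub (by linarith : -1 < a - 1))
  · exact ((hsd_continuousOn β ε).mono
      (Ioo_subset_Ioo (by norm_num) le_rfl)).aestronglyMeasurable measurableSet_Ioo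
  · rw [ae_restrict_iff' measurableSet_Ioo]
    filter_upwards with x hx
    obtain ⟨hx0, hx1⟩ := hx
    have h1x : (0:ℝ) < 1 - x := by linarith
    have h2 : (0:ℝ) < 1 - x ^ 2 := by nlinarith
    have hFl := F_lower hβ ⟨hx0, hx1⟩
    have hnn : 0 ≤ hybridScaleDensity β ε x :=
      mul_nonneg (inv_nonneg.2 h2.le) (exp_pos _).le
    rw [Real.norm_of_nonneg hnn]
    have hcF : c * F β x ≤ a * log (1 - x) := by
      have heq : c * (exp (-β) / 2 * (-log (1 - x))) = a * log (1 - x) := by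
        rw [ha]; ring
      have h' : c * F β x ≤ c * (exp (-β) / 2 * (-log (1 - x))) :=
        mul_le_mul_of_nonpos_left hFl h.le
      linarith
    have hexp : exp (c * F β x) ≤ (1 - x) ^ a := by
      rw [rpow_def_of_pos h1x, mul_comm (log (1 - x)) a]
      exact exp_le_exp.2 hcF
    have hinv : (1 - x ^ 2)⁻¹ ≤ (1 - x)⁻¹ := by
      apply inv_anti₀ h1x
      nlinarith
    calc hybridScaleDensity β ε x
        = (1 - x ^ 2)⁻¹ * exp (c * F β x) := by simp only [hybridScaleDensity, F, hc]
      _ ≤ (1 - x)⁻¹ * (1 - x) ^ a := by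
          apply mul_le_mul hinv hexp (exp_pos _).le (inv_nonneg.2 (by linarith))
      _ = (1 - x) ^ (a - 1) := by
          rw [rpow_sub h1x, rpow_one]
          ring

lemma right_notIntegrable {β ε : ℝ} (hβ : 0 < β) (hε : 0 < ε)
    (h : 0 ≤ exp β - 2 / ε ^ 2) :
    ¬ IntegrableOn (hybridScaleDensity β ε) (Ioo (0 : ℝ) 1) := by
  intro hint
  set c := exp β - 2 / ε ^ 2 with hc
  clear_value c
  have key : IntegrableOn (fun x : ℝ => (2:ℝ)⁻¹ * (1 - x)⁻¹) (Ioo (0:ℝ) 1) := by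
    apply Integrable.mono' hint
    · exact (measurable_const.mul
        ((measurable_const.sub measurable_id).inv)).aestronglyMeasurable
    · rw [ae_restrict_iff' measurableSet_Ioo]
      filter_upwards with x hx
      obtain ⟨hx0, hx1⟩ := hx
      have h1x : (0:ℝ) < 1 - x := by linarith
      have h2 : (0:ℝ) < 1 - x ^ 2 := by nlinarith
      have hnn : (0:ℝ) ≤ (2:ℝ)⁻¹ * (1 - x)⁻¹ := by positivity
      rw [Real.norm_of_nonneg hnn]
      have hF0 : 0 ≤ F β x := F_nonneg ⟨hx0, hx1⟩
      have hexp : (1:ℝ) ≤ exp (c * F β x) := by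
        rw [show (1:ℝ) = exp 0 by simp]
        exact exp_le_exp.2 (mul_nonneg h hF0)
      have hstep1 : (2:ℝ)⁻¹ * (1 - x)⁻¹ ≤ (1 - x ^ 2)⁻¹ := by
        rw [← mul_inv]
        apply inv_anti₀ h2
        nlinarith
      calc (2:ℝ)⁻¹ * (1 - x)⁻¹ ≤ (1 - x ^ 2)⁻¹ := hstep1
        _ ≤ (1 - x ^ 2)⁻¹ * exp (c * F β x) :=
            le_mul_of_one_le_right (inv_nonneg.2 h2.le) hexp
        _ = hybridScaleDensity β ε x := by simp only [hybridScaleDensity, F, hc]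
  have h2 : IntegrableOn (fun x : ℝ => (1 - x)⁻¹) (Ioo (0:ℝ) 1) :=
    (key.const_mul (2:ℝ)).congr (Filter.EventuallyEq.of_eq (funext fun x => by ring))
  exact notint_right h2

lemma left_integrable {β ε : ℝ} (hβ : 0 < β) (hε : 0 < ε)
    (h : 0 < exp β - 2 / ε ^ 2) :
    IntegrableOn (hybridScaleDensity β ε) (Ioo (-1 : ℝ) 0) := by
  set c := exp β - 2 / ε ^ 2 with hc
  clear_value c
  apply Integrable.mono' (int_one_add (by linarith : -1 < c / 2 - 1))
  · exact ((hsd_continuousOn β ε).mono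
      (Ioo_subset_Ioo le_rfl (by norm_num))).aestronglyMeasurable measurableSet_Ioo
  · rw [ae_restrict_iff' measurableSet_Ioo]
    filter_upwards with x hx
    obtain ⟨hx0, hx1⟩ := hx
    have h1x : (0:ℝ) < 1 + x := by linarith
    have h2 : (0:ℝ) < 1 - x ^ 2 := by nlinarith
    have hFu := F_upper hβ ⟨hx0, hx1⟩
    have hnn : 0 ≤ hybridScaleDensity β ε x :=
      mul_nonneg (inv_nonneg.2 h2.le) (exp_pos _).le
    rw [Real.norm_of_nonneg hnn]
    have hcF : c * F β x ≤ c / 2 * log (1 + x) := by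
      have := mul_le_mul_of_nonneg_left hFu h.le
      nlinarith [this]
    have hexp : exp (c * F β x) ≤ (1 + x) ^ (c / 2) := by
      rw [rpow_def_of_pos h1x, mul_comm (log (1 + x)) (c / 2)]
      exact exp_le_exp.2 hcF
    have hinv : (1 - x ^ 2)⁻¹ ≤ (1 + x)⁻¹ := by
      apply inv_anti₀ h1x
      nlinarith
    calc hybridScaleDensity β ε x
        = (1 - x ^ 2)⁻¹ * exp (c * F β x) := by simp only [hybridScaleDensity, F, hc]
      _ ≤ (1 + x)⁻¹ * (1 + x) ^ (c / 2) := by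
          apply mul_le_mul hinv hexp (exp_pos _).le (inv_nonneg.2 (by linarith))
      _ = (1 + x) ^ (c / 2 - 1) := by
          rw [rpow_sub h1x, rpow_one]
          ring

lemma left_notIntegrable {β ε : ℝ} (hβ : 0 < β) (hε : 0 < ε)
    (h : exp β - 2 / ε ^ 2 ≤ 0) :
    ¬ IntegrableOn (hybridScaleDensity β ε) (Ioo (-1 : ℝ) 0) := by
  intro hint
  set c := exp β - 2 / ε ^ 2 with hc
  clear_value c
  have key : IntegrableOn (fun x : ℝ => (2:ℝ)⁻¹ * (1 + x)⁻¹) (Ioo (-1:ℝ) 0) := by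
    apply Integrable.mono' hint
    · exact (measurable_const.mul
        ((measurable_const.add measurable_id).inv)).aestronglyMeasurable
    · rw [ae_restrict_iff' measurableSet_Ioo]
      filter_upwards with x hx
      obtain ⟨hx0, hx1⟩ := hx
      have h1x : (0:ℝ) < 1 + x := by linarith
      have h2 : (0:ℝ) < 1 - x ^ 2 := by nlinarith
      have hnn : (0:ℝ) ≤ (2:ℝ)⁻¹ * (1 + x)⁻¹ := by positivity
      rw [Real.norm_of_nonneg hnn]
      have hF0 : F β x ≤ 0 := F_nonpos ⟨hx0, hx1⟩
      have hexp : (1:ℝ) ≤ exp (c * F β x) := by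
        rw [show (1:ℝ) = exp 0 by simp]
        exact exp_le_exp.2 (by
          simpa [neg_mul_neg] using mul_nonneg (neg_nonneg.2 h) (neg_nonneg.2 hF0))
      have hstep1 : (2:ℝ)⁻¹ * (1 + x)⁻¹ ≤ (1 - x ^ 2)⁻¹ := by
        rw [← mul_inv]
        apply inv_anti₀ h2
        nlinarith
      calc (2:ℝ)⁻¹ * (1 + x)⁻¹ ≤ (1 - x ^ 2)⁻¹ := hstep1
        _ ≤ (1 - x ^ 2)⁻¹ * exp (c * F β x) :=
            le_mul_of_one_le_right (inv_nonneg.2 h2.le) hexp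
        _ = hybridScaleDensity β ε x := by simp only [hybridScaleDensity, F, hc]
  have h2 : IntegrableOn (fun x : ℝ => (1 + x)⁻¹) (Ioo (-1:ℝ) 0) :=
    (key.const_mul (2:ℝ)).congr (Filter.EventuallyEq.of_eq (funext fun x => by ring))
  exact notint_left h2

end HybridAux

/-- Noise-induced clustering threshold: the improper integral `∫₀¹ s_{β,ε}` is finite
iff `ε² < 2e^{−β}`, and `∫₋₁⁰ s_{β,ε}` is finite iff `ε² > 2e^{−β}`. -/
theorem hybrid_scale_function_finiteness (β ε : ℝ) (hβ : 0 < β) (hε : 0 < ε) :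
    (MeasureTheory.IntegrableOn (hybridScaleDensity β ε) (Set.Ioo (0 : ℝ) 1)
        ↔ ε ^ 2 < 2 * exp (-β)) ∧
    (MeasureTheory.IntegrableOn (hybridScaleDensity β ε) (Set.Ioo (-1 : ℝ) 0)
        ↔ 2 * exp (-β) < ε ^ 2) := by
  have hε2 : (0:ℝ) < ε ^ 2 := by positivity
  have hE : (0:ℝ) < exp β := exp_pos β
  have hI : (exp β)⁻¹ * exp β = 1 := inv_mul_cancel₀ hE.ne'
  have hIpos : (0:ℝ) < (exp β)⁻¹ := inv_pos.2 hE
  have hiff1 : exp β - 2 / ε ^ 2 < 0 ↔ ε ^ 2 < 2 * exp (-β) := by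
    rw [sub_neg, lt_div_iff₀ hε2, exp_neg]
    constructor <;> intro h
    · nlinarith [mul_lt_mul_of_pos_left h hIpos]
    · nlinarith [mul_lt_mul_of_pos_left h hE]
  have hiff2 : 0 < exp β - 2 / ε ^ 2 ↔ 2 * exp (-β) < ε ^ 2 := by
    rw [sub_pos, div_lt_iff₀ hε2, exp_neg]
    constructor <;> intro h
    · nlinarith [mul_lt_mul_of_pos_left h hIpos]
    · nlinarith [mul_lt_mul_of_pos_left h hE]
  constructor
  · constructor
    · intro h
      by_contra hlt
      push_neg at hlt
      exact HybridAux.right_notIntegrable hβ hε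
        (by by_contra h'; push_neg at h'; exact absurd (hiff1.1 h') (not_lt.2 hlt)) h
    · intro h
      exact HybridAux.right_integrable hβ hε (hiff1.2 h)
  · constructor
    · intro h
      by_contra hlt
      push_neg at hlt
      exact HybridAux.left_notIntegrable hβ hε
        (by by_contra h'; push_neg at h'; exact absurd (hiff2.1 h') (not_lt.2 hlt)) h
    · intro h
      exact HybridAux.left_integrable hβ hε (hiff2.2 h)
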